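/- A regular language L ⊆ Σ* is weakly acyclic if and only if for all words u ∈ Σ* and v ∈ Σ⁺, the equality Lᵘ = Lᵘᵛ implies Lᵘ = Lᵘʷ for every word w all of whose letters occur in v. -/
import Mathlib

/-- A DFA is *weakly acyclic* if whenever a nonempty word `w` loops on a state `q`,
every letter occurring in `w` self-loops on `q`. -/
def DFA.WeaklyAcyclic {α : Type*} {σ : Type*} (A : DFA α σ) : Prop :=
  ∀ (q : σ) (w : List α), w ≠ [] → A.evalFrom q w = q → ∀ a ∈ w, A.step q a = q

/-- A language is weakly acyclic if it is accepted by some weakly acyclic DFA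
with finitely many states. -/
def Language.IsWeaklyAcyclic {α : Type*} (L : Language α) : Prop :=
  ∃ (σ : Type) (_ : Fintype σ) (A : DFA α σ), A.WeaklyAcyclic ∧ A.accepts = L

/-- The residual of the language `L` with respect to the word `u`. -/
def Language.residual {α : Type*} (L : Language α) (u : List α) : Language α :=
  {v | u ++ v ∈ L}

theorem Language.mem_residual {α : Type*} (L : Language α) (u v : List α) :
    v ∈ L.residual u ↔ u ++ v ∈ L := Iff.rfl

theorem Language.residual_nil {α : Type*} (L : Language α) : L.residual [] = L := by
  ext x; simp [Language.mem_residual]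

theorem Language.residual_append {α : Type*} (L : Language α) (u v : List α) :
    L.residual (u ++ v) = (L.residual u).residual v := by
  ext x; simp [Language.mem_residual, List.append_assoc]

theorem DFA.residual_acceptsFrom {α σ : Type*} (A : DFA α σ) (q : σ) (w : List α) :
    (A.acceptsFrom q).residual w = A.acceptsFrom (A.evalFrom q w) := by
  ext x
  simp [Language.mem_residual, DFA.mem_acceptsFrom, DFA.evalFrom_of_append]

theorem DFA.evalFrom_eq_self {α σ : Type*} (A : DFA α σ) (q : σ) (w : List α)
    (h : ∀ a ∈ w, A.step q a = q) : A.evalFrom q w = q := by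
  induction w with
  | nil => rfl
  | cons a w ih =>
    have : A.evalFrom q (a :: w) = A.evalFrom (A.step q a) w := rfl
    rw [this, h a (by simp)]
    exact ih fun a ha => h a (by simp [ha])

theorem DFA.evalFrom_flatten_replicate {α σ : Type*} (A : DFA α σ) (v : List α) :
    ∀ (n : ℕ) (q : σ),
      A.evalFrom q (List.replicate n v).flatten = (fun s => A.evalFrom s v)^[n] q := by
  intro n
  induction n with
  | zero => intro q; rfl
  | succ n ih =>
    intro q
    rw [List.replicate_succ, List.flatten_cons, DFA.evalFrom_of_append,
      Function.iterate_succ_apply, ih]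

theorem Language.residual_flatten_replicate {α : Type*} (L : Language α) (u v : List α)
    (h : L.residual u = L.residual (u ++ v)) (n : ℕ) :
    L.residual (u ++ (List.replicate n v).flatten) = L.residual u := by
  induction n with
  | zero => simp [Language.residual_append, Language.residual_nil]
  | succ n ih =>
    rw [List.replicate_succ, List.flatten_cons, ← List.append_assoc,
      Language.residual_append (u := u ++ v), ← h, ← Language.residual_append, ih]

/-- A regular language is weakly acyclic iff whenever `Lᵘ = Lᵘᵛ` (with `v` nonempty),
`Lᵘ = Lᵘʷ` for every word `w` all of whose letters occur in `v`. -/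
theorem weaklyAcyclic_iff_residuals {α : Type} [Fintype α]
    (L : Language α) (hreg : L.IsRegular) :
    L.IsWeaklyAcyclic ↔
      ∀ (u v : List α), v ≠ [] → L.residual u = L.residual (u ++ v) →
        ∀ w : List α, (∀ a ∈ w, a ∈ v) → L.residual u = L.residual (u ++ w) := by
  constructor
  · rintro ⟨σ, hfin, A, hwa, hacc⟩ u v hv hres w hw
    -- residuals of L are languages of states
    have hres' : ∀ x : List α, L.residual x = A.acceptsFrom (A.eval x) := by
      intro x
      rw [← hacc]
      exact A.residual_acceptsFrom A.start x
    set q₀ := A.eval u with hq₀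
    set f : ℕ → σ := fun n => (fun s => A.evalFrom s v)^[n] q₀ with hf
    obtain ⟨m, n, hmn, hfeq⟩ : ∃ m n, m < n ∧ f m = f n := by
      obtain ⟨m, n, hne, h⟩ := Finite.exists_ne_map_eq_of_infinite f
      rcases hne.lt_or_gt with h' | h'
      · exact ⟨m, n, h', h⟩
      · exact ⟨n, m, h', h.symm⟩
    set q := f m with hq
    set W := (List.replicate (n - m) v).flatten with hW
    have hWloop : A.evalFrom q W = q := by
      rw [hW, A.evalFrom_flatten_replicate, hq, hf, ← Function.iterate_add_apply]
      have : n - m + m = n := Nat.sub_add_cancel hmn.le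
      rw [this]
      exact hfeq.symm
    have hWne : W ≠ [] := by
      rw [hW]
      intro h
      have := congrArg List.length h
      simp [List.length_flatten] at this
      rcases this with h1 | h1
      · omega
      · exact hv h1
    have hstep : ∀ a ∈ v, A.step q a = q := by
      intro a ha
      refine hwa q W hWne hWloop a ?_
      rw [hW, List.mem_flatten]
      exact ⟨v, by simp [List.mem_replicate]; omega, ha⟩
    have hqlang : A.acceptsFrom q = L.residual u := by
      have h1 : q = A.evalFrom q₀ (List.replicate m v).flatten := by
        rw [A.evalFrom_flatten_replicate]
      rw [h1, ← A.residual_acceptsFrom, hq₀, ← hres' u, ← Language.residual_append,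
        Language.residual_flatten_replicate L u v hres m]
    have hloopw : A.evalFrom q w = q :=
      A.evalFrom_eq_self q w fun a ha => hstep a (hw a ha)
    calc L.residual u = A.acceptsFrom q := hqlang.symm
      _ = A.acceptsFrom (A.evalFrom q w) := by rw [hloopw]
      _ = (A.acceptsFrom q).residual w := (A.residual_acceptsFrom q w).symm
      _ = (L.residual u).residual w := by rw [hqlang]
      _ = L.residual (u ++ w) := (L.residual_append u w).symm
  · intro hcond
    obtain ⟨σ, hfin, A, hacc⟩ := hreg
    -- the set of residuals of L is finite
    have hres' : ∀ x : List α, L.residual x = A.acceptsFrom (A.eval x) := by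
      intro x
      rw [← hacc]
      exact A.residual_acceptsFrom A.start x
    set S : Set (Language α) := {M | ∃ u, M = L.residual u} with hS
    have hSfin : S.Finite := by
      apply (Set.finite_range A.acceptsFrom).subset
      rintro M ⟨u, rfl⟩
      exact ⟨A.eval u, (hres' u).symm⟩
    refine ⟨S, hSfin.fintype, ?_⟩
    refine ⟨⟨fun M a => ⟨M.1.residual [a], ?_⟩, ⟨L, ⟨[], (L.residual_nil).symm⟩⟩,
      {M | [] ∈ M.1}⟩, ?_, ?_⟩
    · obtain ⟨u, hu⟩ := M.2
      exact ⟨u ++ [a], by rw [hu, Language.residual_append]⟩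
    all_goals {
      set B : DFA α S := ⟨fun M a => ⟨M.1.residual [a], by
        obtain ⟨u, hu⟩ := M.2
        exact ⟨u ++ [a], by rw [hu, Language.residual_append]⟩⟩,
        ⟨L, ⟨[], (L.residual_nil).symm⟩⟩, {M | [] ∈ M.1}⟩ with hB
      have heval : ∀ (w : List α) (M : S), (B.evalFrom M w).1 = M.1.residual w := by
        intro w
        induction w with
        | nil => intro M; simp [Language.residual_nil, DFA.evalFrom]
        | cons a w ih =>
          intro M
          have h1 : B.evalFrom M (a :: w) = B.evalFrom (B.step M a) w := rfl
          rw [h1, ih]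
          show (M.1.residual [a]).residual w = M.1.residual (a :: w)
          rw [← Language.residual_append]
          rfl
      first
      | -- weakly acyclic
        (intro q w hwne hloop a haw
         obtain ⟨u, hu⟩ := q.2
         have hLuw : L.residual u = L.residual (u ++ w) := by
           rw [Language.residual_append, ← hu]
           have := heval w q
           rw [hloop] at this
           rw [← this, hu]
         have := hcond u w hwne hLuw [a] (by simpa using haw)
         apply Subtype.ext
         show q.1.residual [a] = q.1
         rw [hu, ← Language.residual_append, ← this])
      | -- accepts = L
        (ext x
         rw [DFA.mem_accepts]
         show B.eval x ∈ {M : S | [] ∈ M.1} ↔ x ∈ L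
         have : (B.eval x).1 = L.residual x := heval x B.start
         simp only [Set.mem_setOf_eq, this]
         rw [Language.mem_residual]
         simp)
    }
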